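/- arXiv:2407.06418 — 3 statements merged into one kernel-verified Lean document; each statement's English description precedes it below -/
import Mathlib

section
/- Let f : ℝ^N × ℝ^p → ℝ^N be continuously differentiable on a neighborhood of a point (x̄, ū) with f(x̄, ū) = x̄, with partial Jacobian matrices J_x = ∂f/∂x(x̄, ū) ∈ ℝ^{N×N} and J_u = ∂f/∂u(x̄, ū) ∈ ℝ^{N×p}. Let W ∈ ℝ^{N×r} satisfy WᵀW = I_r and Wᵀ J_x = Ã Wᵀ with Ã = Wᵀ J_x W, and assume the characteristic polynomial of J_x (over ℂ) factors as charpoly(J_x) = charpoly(Ã) · q, where every complex root of q has modulus strictly less than 1 (i.e., the columns of W span the left eigenspace of all unstable eigenvalues of J_x). Let K̃ : ℝ^r → ℝ^p be continuously differentiable with K̃(0) = 0, set B̃ = Wᵀ J_u, and assume every complex eigenvalue of Ã + B̃ · DK̃(0) has modulus strictly less than 1, where DK̃(0) ∈ ℝ^{p×r} is the Jacobian of K̃ at 0 (i.e., K̃ stabilizes the latent model of unstable dynamics). Then there exists ε > 0 such that for every x₀ with ‖x₀ − x̄‖ ≤ ε, the closed-loop sequence defined by x(0) = x₀ and x(t+1)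 = f(x(t), K̃(Wᵀ(x(t) − x̄)) + ū) converges to x̄ as t → ∞. -/
/-!
The closed loop `g y = f (y, K̃ (Wᵀ (y - x̄)) + ū)` has linearisation `M = J_x + C Wᵀ` at `x̄`,
where `C = J_u DK`. The characteristic matrices `X = t - J_x` and `Y = t - Ã` satisfy
`Wᵀ X = Y Wᵀ`, so multiplying `[[X - C Wᵀ, C], [0, Y]]` on both sides by unipotent
block-triangular matrices turns it into `[[X, C], [0, Y - Wᵀ C]]`; hence
`charpoly M · charpoly Ã = charpoly J_x · charpoly (Ã + Wᵀ C)`, i.e.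
`charpoly M = q · charpoly (Ã + Wᵀ J_u DK)`, and all eigenvalues of `M` lie in the open unit
disc. By Gelfand's formula some power `M ^ m` has operator norm `< 1`, so `g^[m]` contracts a
neighbourhood of `x̄` towards `x̄`, and continuity of the finitely many intermediate iterates
`g^[j]`, `j < m`, upgrades this to convergence of the whole trajectory.
-/

open Matrix Polynomial Filter Topology

theorem Matrix.det_sub_mul_mul_det_of_mul_eq {m n R : Type*} [Fintype m] [Fintype n]
    [DecidableEq m] [DecidableEq n] [CommRing R]
    {X : Matrix m m R} {Y : Matrix n n R} {U : Matrix n m R} (C : Matrix m n R)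
    (h : U * X = Y * U) : (X - C * U).det * Y.det = X.det * (Y - U * C).det := by
  have hblocks : fromBlocks 1 0 (-U) 1 * fromBlocks (X - C * U) C 0 Y * fromBlocks 1 0 U 1 =
      fromBlocks X C 0 (Y - U * C) := by
    simp only [fromBlocks_multiply]
    congr 1 <;> simp [Matrix.mul_sub, Matrix.add_mul, h, Matrix.mul_assoc]
    abel
  simpa [det_fromBlocks_zero₂₁, det_fromBlocks_zero₁₂] using congrArg det hblocks

theorem Matrix.charpoly_add_mul_mul_charpoly_of_mul_eq {m n R : Type*} [Fintype m] [Fintype n]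
    [DecidableEq m] [DecidableEq n] [CommRing R]
    {J : Matrix m m R} {A : Matrix n n R} {U : Matrix n m R} (C : Matrix m n R)
    (h : U * J = A * U) :
    (J + C * U).charpoly * A.charpoly = J.charpoly * (A + U * C).charpoly := by
  have hU : U.map Polynomial.C * charmatrix J = charmatrix A * U.map Polynomial.C := by
    simp only [charmatrix, Matrix.mul_sub, Matrix.sub_mul, RingHom.mapMatrix_apply,
      ← Matrix.map_mul, h]
    congr 1
    refine Matrix.ext fun i j => ?_
    simp only [scalar_apply, mul_diagonal, diagonal_mul, map_apply]
    exact mul_comm _ _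
  simpa [Matrix.charpoly, charmatrix, Matrix.map_add, Matrix.map_mul, sub_add_eq_sub_sub] using
    det_sub_mul_mul_det_of_mul_eq (C.map Polynomial.C) hU

theorem Matrix.charpoly_add_mul_eq_mul_charpoly_of_mul_eq {m n R : Type*} [Fintype m] [Fintype n]
    [DecidableEq m] [DecidableEq n] [CommRing R]
    {J : Matrix m m R} {A : Matrix n n R} {U : Matrix n m R} (C : Matrix m n R) {q : R[X]}
    (h : U * J = A * U) (hfac : J.charpoly = A.charpoly * q) :
    (J + C * U).charpoly = q * (A + U * C).charpoly := by
  apply A.charpoly_monic.isRegular.right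
  simp only [charpoly_add_mul_mul_charpoly_of_mul_eq C h, hfac]
  ring

theorem Matrix.charpoly_map_add_mul_eq_mul_charpoly_of_mul_eq {m n R S : Type*}
    [Fintype m] [Fintype n] [DecidableEq m] [DecidableEq n] [CommRing R] [CommRing S] (φ : R →+* S)
    {J : Matrix m m R} {A : Matrix n n R} {U : Matrix n m R} (C : Matrix m n R) {q : S[X]}
    (h : U * J = A * U) (hfac : (J.map φ).charpoly = (A.map φ).charpoly * q) :
    ((J + C * U).map φ).charpoly = q * ((A + U * C).map φ).charpoly := by
  have hφ : U.map φ * J.map φ = A.map φ * U.map φ := by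
    rw [← Matrix.map_mul, h, Matrix.map_mul]
  rw [Matrix.map_add _ (map_add φ), Matrix.map_add _ (map_add φ), Matrix.map_mul,
    Matrix.map_mul]
  exact charpoly_add_mul_eq_mul_charpoly_of_mul_eq (C.map φ) hφ hfac

theorem spectrum.eventually_norm_pow_lt_one {A : Type*} [NormedRing A] [NormedAlgebra ℂ A]
    [CompleteSpace A] {a : A} (h : ∀ z ∈ spectrum ℂ a, ‖z‖ < 1) :
    ∀ᶠ k in atTop, ‖a ^ k‖ < 1 := by
  rcases subsingleton_or_nontrivial A with hA | hA
  · exact Eventually.of_forall fun k => by simp [Subsingleton.elim (a ^ k) 0]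
  have hρ : spectralRadius ℂ a < 1 := by
    exact_mod_cast spectrum.spectralRadius_lt_of_forall_lt a (r := 1) fun z hz => by
      exact_mod_cast h z hz
  filter_upwards [(pow_nnnorm_pow_one_div_tendsto_nhds_spectralRadius a).eventually_lt_const hρ,
    eventually_ne_atTop 0] with k hk hk0
  by_contra! h1
  refine (ENNReal.one_le_rpow ?_ (by positivity)).not_gt hk
  exact_mod_cast h1

section LinftyOpNorm

-- The `ℓ∞` operator norm on matrices is the operator norm for the sup norm on `n → ℝ`.
attribute [local instance] Matrix.linftyOpNormedAddCommGroup Matrix.linftyOpNormedRing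
  Matrix.linftyOpNormedAlgebra

theorem Matrix.linfty_opNorm_map_ofReal {m n : Type*} [Fintype m] [Fintype n]
    (M : Matrix m n ℝ) : ‖M.map Complex.ofReal‖ = ‖M‖ := by
  simp [linfty_opNorm_def]

theorem Matrix.eventually_norm_toContinuousLinearMap_pow_lt_one {n : Type*} [Fintype n]
    [DecidableEq n] (M : Matrix n n ℝ)
    (h : ∀ z : ℂ, (M.map Complex.ofReal).charpoly.IsRoot z → ‖z‖ < 1) :
    ∀ᶠ k in atTop, ‖Module.End.toContinuousLinearMap (n → ℝ) (toLin' M) ^ k‖ < 1 := by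
  have : ∀ᶠ k in atTop, ‖(M.map Complex.ofReal) ^ k‖ < 1 :=
    spectrum.eventually_norm_pow_lt_one fun z hz => h z (mem_spectrum_iff_isRoot_charpoly.1 hz)
  refine this.mono fun k hk => ?_
  have hT : Module.End.toContinuousLinearMap (n → ℝ) (toLin' M) ^ k =
      Module.End.toContinuousLinearMap (n → ℝ) (toLin' (M ^ k)) := by
    rw [← map_pow, toLin'_pow]
  rw [hT, ← linfty_opNorm_toMatrix]
  change ‖LinearMap.toMatrix' (toLin' (M ^ k))‖ < 1
  rwa [LinearMap.toMatrix'_toLin', ← linfty_opNorm_map_ofReal,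
    show (M ^ k).map Complex.ofReal = M.map Complex.ofReal ^ k from
      map_pow Complex.ofRealHom.mapMatrix M k]

end LinftyOpNorm

theorem tendsto_iterate_of_hasFDerivAt_of_norm_lt_one {𝕜 E : Type*} [NontriviallyNormedField 𝕜]
    [NormedAddCommGroup E] [NormedSpace 𝕜 E] {h : E → E} {T : E →L[𝕜] E} {x : E}
    (hfix : h x = x) (hh : HasFDerivAt h T x) (hT : ‖T‖ < 1) :
    ∀ᶠ y in 𝓝 x, Tendsto (fun k => h^[k] y) atTop (𝓝 x) := by
  obtain ⟨c, hTc, hc1⟩ := exists_between hT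
  have hstep : ∀ᶠ y in 𝓝 x, dist (h y) x ≤ c * dist y x := by
    filter_upwards [hh.isLittleO.def (sub_pos.2 hTc)] with y hy
    rw [dist_eq_norm, dist_eq_norm]
    calc ‖h y - x‖ ≤ ‖h y - h x - T (y - x)‖ + ‖T (y - x)‖ := by
          simpa [hfix] using norm_add_le (h y - h x - T (y - x)) (T (y - x))
      _ ≤ (c - ‖T‖) * ‖y - x‖ + ‖T‖ * ‖y - x‖ := add_le_add hy (T.le_opNorm _)
      _ = c * ‖y - x‖ := by ring
  obtain ⟨δ, hδ, hball⟩ := Metric.eventually_nhds_iff_ball.1 hstep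
  filter_upwards [Metric.ball_mem_nhds x hδ] with y hy
  have hc0 : 0 ≤ c := (norm_nonneg T).trans hTc.le
  have hdist : ∀ k, dist (h^[k] y) x ≤ c ^ k * dist y x := by
    intro k
    induction k with
    | zero => simp
    | succ k ih =>
      have hk : h^[k] y ∈ Metric.ball x δ :=
        lt_of_le_of_lt (ih.trans (mul_le_of_le_one_left dist_nonneg (pow_le_one₀ hc0 hc1.le))) hy
      rw [Function.iterate_succ_apply', pow_succ', mul_assoc]
      exact (hball _ hk).trans (by gcongr)
  refine tendsto_iff_dist_tendsto_zero.2 (squeeze_zero (fun _ => dist_nonneg) hdist ?_)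
  simpa using (tendsto_pow_atTop_nhds_zero_of_lt_one hc0 hc1).mul_const (dist y x)

theorem tendsto_iterate_of_tendsto_iterate_iterate {X : Type*} [TopologicalSpace X] {g : X → X}
    {x y : X} (hg : ContinuousAt g x) (hfix : g x = x) {m : ℕ} (hm : m ≠ 0)
    (hy : Tendsto (fun k => (g^[m])^[k] y) atTop (𝓝 x)) :
    Tendsto (fun n => g^[n] y) atTop (𝓝 x) := by
  intro U hU
  rw [Filter.mem_map]
  have hV : ∀ᶠ z in 𝓝 x, ∀ j ∈ Finset.range m, g^[j] z ∈ U :=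
    (Finset.eventually_all _).2 fun j _ =>
      (hg.iterate hfix j).preimage_mem_nhds (by rwa [Function.iterate_fixed hfix])
  filter_upwards [(hy.comp (Nat.tendsto_div_const_atTop hm)).eventually hV] with n hn
  have hsplit : g^[n] y = g^[n % m] ((g^[m])^[n / m] y) := by
    rw [← Function.iterate_mul, ← Function.iterate_add_apply, Nat.mod_add_div]
  rw [Set.mem_preimage, hsplit]
  exact hn (n % m) (Finset.mem_range.2 (Nat.mod_lt n (Nat.pos_of_ne_zero hm)))

theorem HasFDerivAt.feedback {𝕜 E F G : Type*} [NontriviallyNormedField 𝕜]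
    [NormedAddCommGroup E] [NormedSpace 𝕜 E] [NormedAddCommGroup F] [NormedSpace 𝕜 F]
    [NormedAddCommGroup G] [NormedSpace 𝕜 G] {f : E × F → E} {f' : E × F →L[𝕜] E}
    {K : G → F} {K' : G →L[𝕜] F} {P : E →L[𝕜] G} {x : E} {u : F}
    (hf : HasFDerivAt f f' (x, u)) (hK : HasFDerivAt K K' 0) (hK0 : K 0 = 0) :
    HasFDerivAt (fun y => f (y, K (P (y - x)) + u))
      (f' ∘L (ContinuousLinearMap.id 𝕜 E).prod (K' ∘L P)) x := by
  have henc : HasFDerivAt (fun y => P (y - x)) P x :=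
    P.hasFDerivAt.comp x ((hasFDerivAt_id x).sub_const x)
  have hK' : HasFDerivAt K K' (P (x - x)) := by rwa [sub_self, map_zero]
  refine HasFDerivAt.comp x ?_ ((hasFDerivAt_id x).prodMk ((hK'.comp x henc).add_const u))
  simpa [hK0] using hf

theorem stmt_0_general
    {N p r : ℕ}
    (f : (Fin N → ℝ) × (Fin p → ℝ) → (Fin N → ℝ))
    (xbar : Fin N → ℝ) (ubar : Fin p → ℝ)
    (hf : ContDiffAt ℝ 1 f (xbar, ubar))
    (heq : f (xbar, ubar) = xbar)
    (Jx : Matrix (Fin N) (Fin N) ℝ) (Ju : Matrix (Fin N) (Fin p) ℝ)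
    (hJ : ∀ (v : Fin N → ℝ) (w : Fin p → ℝ),
      fderiv ℝ f (xbar, ubar) (v, w) = Jx.mulVec v + Ju.mulVec w)
    (W : Matrix (Fin N) (Fin r) ℝ)
    (Atil : Matrix (Fin r) (Fin r) ℝ)
    (hinv : Wᵀ * Jx = Atil * Wᵀ)
    (q : Polynomial ℂ)
    (hfac : (Jx.map Complex.ofReal).charpoly = (Atil.map Complex.ofReal).charpoly * q)
    (hq : ∀ z : ℂ, q.IsRoot z → ‖z‖ < 1)
    (Ktil : (Fin r → ℝ) → (Fin p → ℝ))
    (hK : ContDiffAt ℝ 1 Ktil 0)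
    (hK0 : Ktil 0 = 0)
    (DK : Matrix (Fin p) (Fin r) ℝ)
    (hDK : ∀ z : Fin r → ℝ, fderiv ℝ Ktil 0 z = DK.mulVec z)
    (hstab : ∀ z : ℂ,
      ((Atil + Wᵀ * Ju * DK).map Complex.ofReal).charpoly.IsRoot z → ‖z‖ < 1) :
    ∃ ε > (0 : ℝ), ∀ x0 : Fin N → ℝ, ‖x0 - xbar‖ ≤ ε →
      ∀ x : ℕ → (Fin N → ℝ), x 0 = x0 →
        (∀ t : ℕ, x (t + 1) = f (x t, Ktil (Wᵀ.mulVec (x t - xbar)) + ubar)) →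
        Tendsto x atTop (nhds xbar) := by
  set M := Jx + Ju * DK * Wᵀ
  set g : (Fin N → ℝ) → (Fin N → ℝ) := fun y => f (y, Ktil (Wᵀ *ᵥ (y - xbar)) + ubar)
  have hgfix : g xbar = xbar := by simp [g, hK0, heq]
  have hg : HasFDerivAt g (Module.End.toContinuousLinearMap _ (toLin' M)) xbar := by
    refine ((hf.differentiableAt one_ne_zero).hasFDerivAt.feedback
      (hK.differentiableAt one_ne_zero).hasFDerivAt hK0
      (P := LinearMap.toContinuousLinearMap (toLin' Wᵀ))).congr_fderiv ?_
    ext1 v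
    change _ = M *ᵥ v
    simp [hJ, hDK, M, Matrix.add_mulVec, Matrix.mulVec_mulVec, Matrix.mul_assoc]
  have hM : ∀ z : ℂ, (M.map Complex.ofReal).charpoly.IsRoot z → ‖z‖ < 1 := by
    have hfacM : (M.map Complex.ofReal).charpoly =
        q * ((Atil + Wᵀ * Ju * DK).map Complex.ofReal).charpoly := by
      rw [Matrix.mul_assoc Wᵀ]
      exact charpoly_map_add_mul_eq_mul_charpoly_of_mul_eq Complex.ofRealHom (Ju * DK) hinv hfac
    intro z hz
    rw [hfacM, root_mul] at hz
    exact hz.elim (hq z) (hstab z)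
  obtain ⟨m, hTm, hm⟩ :=
    ((M.eventually_norm_toContinuousLinearMap_pow_lt_one hM).and (eventually_ne_atTop 0)).exists
  have hconv : ∀ᶠ y in 𝓝 xbar, Tendsto (fun t => g^[t] y) atTop (𝓝 xbar) :=
    (tendsto_iterate_of_hasFDerivAt_of_norm_lt_one (Function.iterate_fixed hgfix m)
      (hg.iterate hgfix m) hTm).mono fun y =>
        tendsto_iterate_of_tendsto_iterate_iterate hg.continuousAt hgfix hm
  obtain ⟨ε, hε, hball⟩ := Metric.nhds_basis_closedBall.eventually_iff.1 hconv
  refine ⟨ε, hε, fun x0 hx0 x hx0' hrec => ?_⟩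
  have hx : x = fun t => g^[t] x0 := by
    funext t
    induction t with
    | zero => exact hx0'
    | succ t ih => rw [hrec t, ih, Function.iterate_succ_apply']
  exact hx ▸ hball (by rwa [Metric.mem_closedBall, dist_eq_norm])

/-- Theorem 1 of the paper: a latent policy `K̃` whose linearization Schur-stabilizes
the latent model of unstable dynamics, lifted through the encoder `x ↦ Wᵀ(x - x̄)`,
locally stabilizes the full nonlinear system. -/
theorem stmt_0
    {N p r : ℕ}
    (f : (Fin N → ℝ) × (Fin p → ℝ) → (Fin N → ℝ))
    (xbar : Fin N → ℝ) (ubar : Fin p → ℝ)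
    (hf : ContDiffAt ℝ 1 f (xbar, ubar))
    (heq : f (xbar, ubar) = xbar)
    (Jx : Matrix (Fin N) (Fin N) ℝ) (Ju : Matrix (Fin N) (Fin p) ℝ)
    (hJ : ∀ (v : Fin N → ℝ) (w : Fin p → ℝ),
      fderiv ℝ f (xbar, ubar) (v, w) = Jx.mulVec v + Ju.mulVec w)
    (W : Matrix (Fin N) (Fin r) ℝ)
    (hW : Wᵀ * W = 1)
    (Atil : Matrix (Fin r) (Fin r) ℝ)
    (hAtil : Atil = Wᵀ * Jx * W)
    (hinv : Wᵀ * Jx = Atil * Wᵀ)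
    (q : Polynomial ℂ)
    (hfac : (Jx.map Complex.ofReal).charpoly = (Atil.map Complex.ofReal).charpoly * q)
    (hq : ∀ z : ℂ, q.IsRoot z → ‖z‖ < 1)
    (Ktil : (Fin r → ℝ) → (Fin p → ℝ))
    (hK : ContDiffAt ℝ 1 Ktil 0)
    (hK0 : Ktil 0 = 0)
    (DK : Matrix (Fin p) (Fin r) ℝ)
    (hDK : ∀ z : Fin r → ℝ, fderiv ℝ Ktil 0 z = DK.mulVec z)
    (hstab : ∀ z : ℂ,
      ((Atil + Wᵀ * Ju * DK).map Complex.ofReal).charpoly.IsRoot z → ‖z‖ < 1) :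
    ∃ ε > (0 : ℝ), ∀ x0 : Fin N → ℝ, ‖x0 - xbar‖ ≤ ε →
      ∀ x : ℕ → (Fin N → ℝ), x 0 = x0 →
        (∀ t : ℕ, x (t + 1) = f (x t, Ktil (Wᵀ.mulVec (x t - xbar)) + ubar)) →
        Tendsto x atTop (nhds xbar) :=
  stmt_0_general f xbar ubar hf heq Jx Ju hJ W Atil hinv q hfac hq Ktil hK hK0 DK hDK hstab
end

section
/- Let A ∈ ℂ^{N×N}, B ∈ ℂ^{N×p}, and let W ∈ ℂ^{N×r} satisfy WᴴW = I_r and Wᴴ A = Ã Wᴴ with Ã = Wᴴ A W. Assume the characteristic polynomial of A factors as charpoly(A) = charpoly(Ã) · q, where every complex root of q has modulus strictly less than 1. Let K ∈ ℂ^{p×r} be such that every eigenvalue of Ã + Wᴴ B K has modulus strictly less than 1. Then every eigenvalue of A + B K Wᴴ has modulus strictly less than 1. -/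
/-! If `V A = A' V`, then `V (X - A)⁻¹ = (X - A')⁻¹ V` over the fraction field of `R[X]`, so
the Weinstein–Aronszajn identity `det (1 + U V) = det (1 + V U)` turns the matrix determinant
lemma for `X - A - C V` into `χ(A + C V) χ(A') = χ(A) χ(A' + V C)`. With `C = B K`, `V = Wᴴ` and
`χ(A) = χ(Ã) q`, cancelling `χ(Ã)` gives `χ(A + B K Wᴴ) = q χ(Ã + Wᴴ B K)`, whose roots are
roots of `q` or eigenvalues of `Ã + Wᴴ B K`. -/

open Matrix Polynomial

namespace Matrix

variable {m n R : Type*} [Fintype m] [Fintype n] [DecidableEq m] [DecidableEq n] [CommRing R]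

theorem mul_nonsing_inv_eq_nonsing_inv_mul_of_mul_eq {S : Matrix n n R} {S' : Matrix m m R}
    {V : Matrix m n R} (hS : IsUnit S.det) (hS' : IsUnit S'.det) (h : V * S = S' * V) :
    V * S⁻¹ = S'⁻¹ * V :=
  calc V * S⁻¹ = S'⁻¹ * (S' * V * S⁻¹) := by
        rw [Matrix.mul_assoc, nonsing_inv_mul_cancel_left _ _ hS']
    _ = S'⁻¹ * V := by rw [← h, mul_nonsing_inv_cancel_right _ _ hS]

theorem det_sub_mul_mul_det_eq_det_mul_det_sub_mul {S : Matrix n n R} {S' : Matrix m m R}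
    {V : Matrix m n R} (U : Matrix n m R) (hS : IsUnit S.det) (hS' : IsUnit S'.det)
    (h : V * S = S' * V) :
    (S - U * V).det * S'.det = S.det * (S' - V * U).det := by
  rw [sub_eq_add_neg, sub_eq_add_neg, ← Matrix.neg_mul, ← Matrix.mul_neg,
    det_add_mul _ _ hS, det_add_mul _ _ hS', mul_nonsing_inv_eq_nonsing_inv_mul_of_mul_eq hS hS' h,
    det_one_add_mul_comm (S'⁻¹ * V), Matrix.mul_assoc (-U)]
  ring

theorem charmatrix_add (M M' : Matrix n n R) :
    charmatrix (M + M') = charmatrix M - M'.map Polynomial.C := by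
  rw [charmatrix, charmatrix, RingHom.mapMatrix_apply, RingHom.mapMatrix_apply,
    Matrix.map_add _ (map_add _), sub_add_eq_sub_sub]

theorem map_mul_charmatrix_of_mul_eq {A : Matrix n n R} {A' : Matrix m m R} {V : Matrix m n R}
    (h : V * A = A' * V) :
    V.map Polynomial.C * charmatrix A = charmatrix A' * V.map Polynomial.C := by
  simp only [charmatrix, RingHom.mapMatrix_apply, Matrix.mul_sub, Matrix.sub_mul,
    ← Matrix.map_mul, h]
  congr 1
  ext i j : 1
  rw [scalar_apply, scalar_apply, mul_diagonal, diagonal_mul]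
  exact mul_comm _ _

theorem isUnit_det_map_charmatrix [IsDomain R] (M : Matrix n n R) :
    IsUnit ((charmatrix M).map (algebraMap R[X] (FractionRing R[X]))).det := by
  rw [← RingHom.mapMatrix_apply, ← RingHom.map_det, isUnit_iff_ne_zero]
  exact IsFractionRing.to_map_ne_zero_of_mem_nonZeroDivisors
    (mem_nonZeroDivisors_of_ne_zero M.charpoly_monic.ne_zero)

theorem charpoly_add_mul_mul_charpoly_of_mul_eq_s1 [IsDomain R] {A : Matrix n n R}
    {A' : Matrix m m R} {V : Matrix m n R} (C : Matrix n m R) (h : V * A = A' * V) :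
    (A + C * V).charpoly * A'.charpoly = A.charpoly * (A' + V * C).charpoly := by
  apply IsFractionRing.injective R[X] (FractionRing R[X])
  simp only [map_mul, charpoly, RingHom.map_det, RingHom.mapMatrix_apply, charmatrix_add,
    Matrix.map_mul, Matrix.map_sub _ (map_sub _)]
  exact det_sub_mul_mul_det_eq_det_mul_det_sub_mul _ (isUnit_det_map_charmatrix A)
    (isUnit_det_map_charmatrix A') (by rw [← Matrix.map_mul, ← Matrix.map_mul,
      map_mul_charmatrix_of_mul_eq h])

end Matrix

theorem stmt_1_general
    {N p r : ℕ}
    (A : Matrix (Fin N) (Fin N) ℂ) (B : Matrix (Fin N) (Fin p) ℂ)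
    (W : Matrix (Fin N) (Fin r) ℂ)
    (Atil : Matrix (Fin r) (Fin r) ℂ)
    (hinv : Wᴴ * A = Atil * Wᴴ)
    (q : Polynomial ℂ)
    (hfac : A.charpoly = Atil.charpoly * q)
    (hq : ∀ z : ℂ, q.IsRoot z → ‖z‖ < 1)
    (K : Matrix (Fin p) (Fin r) ℂ)
    (hK : ∀ z : ℂ, (Atil + Wᴴ * B * K).charpoly.IsRoot z → ‖z‖ < 1) :
    ∀ z : ℂ, (A + B * K * Wᴴ).charpoly.IsRoot z → ‖z‖ < 1 := by
  have hlift : (A + B * K * Wᴴ).charpoly = q * (Atil + Wᴴ * B * K).charpoly := by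
    apply mul_right_cancel₀ Atil.charpoly_monic.ne_zero
    rw [charpoly_add_mul_mul_charpoly_of_mul_eq_s1 (B * K) hinv, hfac, Matrix.mul_assoc Wᴴ]
    ring
  intro z hz
  rw [hlift, root_mul] at hz
  exact hz.elim (hq z) (hK z)

/-- Linear-systems core of the paper's Theorem 1: a feedback `K` Schur-stabilizing the
latent model `(Ã, WᴴB)` on the left eigenspace of the unstable eigenvalues of `A`,
lifted as `K Wᴴ`, Schur-stabilizes the full linear system. -/
theorem stmt_1
    {N p r : ℕ}
    (A : Matrix (Fin N) (Fin N) ℂ) (B : Matrix (Fin N) (Fin p) ℂ)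
    (W : Matrix (Fin N) (Fin r) ℂ)
    (hW : Wᴴ * W = 1)
    (Atil : Matrix (Fin r) (Fin r) ℂ)
    (hAtil : Atil = Wᴴ * A * W)
    (hinv : Wᴴ * A = Atil * Wᴴ)
    (q : Polynomial ℂ)
    (hfac : A.charpoly = Atil.charpoly * q)
    (hq : ∀ z : ℂ, q.IsRoot z → ‖z‖ < 1)
    (K : Matrix (Fin p) (Fin r) ℂ)
    (hK : ∀ z : ℂ, (Atil + Wᴴ * B * K).charpoly.IsRoot z → ‖z‖ < 1) :
    ∀ z : ℂ, (A + B * K * Wᴴ).charpoly.IsRoot z → ‖z‖ < 1 :=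
  stmt_1_general A B W Atil hinv q hfac hq K hK
end

section
/- Let A ∈ ℂ^{N×N}, B ∈ ℂ^{N×p}, W ∈ ℂ^{N×r} with WᴴW = I_r and Wᴴ A = Ã Wᴴ, where Ã = Wᴴ A W, and let K ∈ ℂ^{p×r}. Then the characteristic polynomials satisfy the identity charpoly(A + B K Wᴴ) · charpoly(Ã) = charpoly(A) · charpoly(Ã + Wᴴ B K). -/
open Matrix Polynomial

set_option synthInstance.maxHeartbeats 400000
set_option maxHeartbeats 1000000

noncomputable def myphi : Polynomial ℂ →+* RatFunc ℂ := algebraMap _ _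
noncomputable def myg : ℂ →+* RatFunc ℂ := myphi.comp Polynomial.C

lemma myphi_inj : Function.Injective myphi := IsFractionRing.injective _ _

lemma charpoly_map' {n : ℕ} (M : Matrix (Fin n) (Fin n) ℂ) :
    myphi M.charpoly
      = ((myphi X) • (1 : Matrix (Fin n) (Fin n) (RatFunc ℂ)) - M.map myg).det := by
  rw [Matrix.charpoly, RingHom.map_det]
  congr 1
  ext i j
  by_cases h : i = j
  · subst h
    simp [charmatrix_apply_eq, Matrix.one_apply, Matrix.smul_apply, myg]
  · simp [charmatrix_apply_ne _ _ _ h, Matrix.one_apply, h, Matrix.smul_apply, myg]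

lemma field_key {F : Type*} [Field F] {N p r : ℕ}
    (P : Matrix (Fin N) (Fin N) F) (Q : Matrix (Fin r) (Fin r) F)
    (B : Matrix (Fin N) (Fin p) F) (K : Matrix (Fin p) (Fin r) F)
    (V : Matrix (Fin r) (Fin N) F)
    (hP : IsUnit P.det) (hQ : IsUnit Q.det) (hVP : V * P = Q * V) :
    (P - B * K * V).det * Q.det = P.det * (Q - V * (B * K)).det := by
  have hPi : P * P⁻¹ = 1 := Matrix.mul_nonsing_inv P hP
  have hQi : Q⁻¹ * Q = 1 := Matrix.nonsing_inv_mul Q hQ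
  have hVPi : V * P⁻¹ = Q⁻¹ * V := by
    calc V * P⁻¹ = Q⁻¹ * (Q * V) * P⁻¹ := by rw [← Matrix.mul_assoc, hQi, Matrix.one_mul]
    _ = Q⁻¹ * (V * P) * P⁻¹ := by rw [hVP]
    _ = Q⁻¹ * V * (P * P⁻¹) := by rw [Matrix.mul_assoc, Matrix.mul_assoc, Matrix.mul_assoc]
    _ = Q⁻¹ * V := by rw [hPi, Matrix.mul_one]
  have h1 : P - B * K * V = P * (1 - P⁻¹ * (B * K) * V) := by
    rw [Matrix.mul_sub, Matrix.mul_one, ← Matrix.mul_assoc, ← Matrix.mul_assoc, hPi,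
      Matrix.one_mul]
  have h2 : (1 - P⁻¹ * (B * K) * V).det = (1 - V * (P⁻¹ * (B * K))).det :=
    Matrix.det_one_sub_mul_comm _ _
  have h3 : 1 - V * (P⁻¹ * (B * K)) = Q⁻¹ * (Q - V * (B * K)) := by
    rw [Matrix.mul_sub, hQi, ← Matrix.mul_assoc, hVPi, Matrix.mul_assoc]
  have hdQi : Q⁻¹.det * Q.det = 1 := by
    rw [← Matrix.det_mul, hQi, Matrix.det_one]
  rw [h1, Matrix.det_mul, h2, h3, Matrix.det_mul]
  calc P.det * (Q⁻¹.det * (Q - V * (B * K)).det) * Q.det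
      = P.det * (Q - V * (B * K)).det * (Q⁻¹.det * Q.det) := by ring
    _ = P.det * (Q - V * (B * K)).det := by rw [hdQi, mul_one]

/-- The lifted feedback `K Wᴴ` replaces exactly the latent eigenvalues of `A` (those of `Ã`)
by the eigenvalues of the latent closed loop `Ã + Wᴴ B K`:
`charpoly(A + B K Wᴴ) · charpoly(Ã) = charpoly(A) · charpoly(Ã + Wᴴ B K)`. -/
theorem stmt_2
    {N p r : ℕ}
    (A : Matrix (Fin N) (Fin N) ℂ) (B : Matrix (Fin N) (Fin p) ℂ)
    (W : Matrix (Fin N) (Fin r) ℂ)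
    (hW : Wᴴ * W = 1)
    (Atil : Matrix (Fin r) (Fin r) ℂ)
    (hAtil : Atil = Wᴴ * A * W)
    (hinv : Wᴴ * A = Atil * Wᴴ)
    (K : Matrix (Fin p) (Fin r) ℂ) :
    (A + B * K * Wᴴ).charpoly * Atil.charpoly
      = A.charpoly * (Atil + Wᴴ * B * K).charpoly := by
  apply myphi_inj
  rw [_root_.map_mul, _root_.map_mul, charpoly_map', charpoly_map', charpoly_map',
    charpoly_map']
  set x : RatFunc ℂ := myphi X with hx
  set A₁ := A.map myg with hA₁
  set B₁ := B.map myg with hB₁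
  set K₁ := K.map myg with hK₁
  set V₁ := (Wᴴ).map myg with hV₁
  set At₁ := Atil.map myg with hAt₁
  have hmapadd1 : (A + B * K * Wᴴ).map myg = A₁ + B₁ * K₁ * V₁ := by
    simp [Matrix.map_add, Matrix.map_mul, hA₁, hB₁, hK₁, hV₁]
  have hmapadd2 : (Atil + Wᴴ * B * K).map myg = At₁ + V₁ * (B₁ * K₁) := by
    simp [Matrix.map_add, Matrix.map_mul, hAt₁, hB₁, hK₁, hV₁, Matrix.mul_assoc]
  rw [hmapadd1, hmapadd2]
  have e1 : x • (1 : Matrix (Fin N) (Fin N) (RatFunc ℂ)) - (A₁ + B₁ * K₁ * V₁)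
      = (x • 1 - A₁) - B₁ * K₁ * V₁ := by abel
  have e2 : x • (1 : Matrix (Fin r) (Fin r) (RatFunc ℂ)) - (At₁ + V₁ * (B₁ * K₁))
      = (x • 1 - At₁) - V₁ * (B₁ * K₁) := by abel
  rw [e1, e2]
  apply field_key
  · rw [← charpoly_map']
    simp only [isUnit_iff_ne_zero, ne_eq, map_eq_zero_iff myphi myphi_inj]
    exact (Matrix.charpoly_monic A).ne_zero
  · rw [← charpoly_map']
    simp only [isUnit_iff_ne_zero, ne_eq, map_eq_zero_iff myphi myphi_inj]
    exact (Matrix.charpoly_monic Atil).ne_zero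
  · have hcomm : V₁ * A₁ = At₁ * V₁ := by
      rw [hV₁, hA₁, hAt₁, ← Matrix.map_mul, ← Matrix.map_mul, hinv]
    rw [Matrix.mul_sub, Matrix.sub_mul, hcomm, Matrix.mul_smul, Matrix.mul_one,
      Matrix.smul_mul, Matrix.one_mul]
end
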